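/- arXiv:1202.2785 — 4 statements merged into one kernel-verified Lean document; each statement's English description precedes it below -/
import Mathlib

section
/- Under the stated assumptions, the true period P of Rayleigh's stretched string satisfies the upper bound P ≤ P̄, where P̄ = 2π/√(2T/(mL)) is Rayleigh's approximate period. -/
open Real MeasureTheory intervalIntegral Set

/-!
Since `√(L² + y²) ≥ L`, the radicand `1/L₀ - 2/(√(L² + y²) + √(L² + y₀²))` is at least
`1/L₀ - 1/L > 0`, so the integral is at most `(1/L₀ - 1/L)^(-1/2) ∫₀^{y₀} dy / √(y₀² - y²)`.
The last integral is the arcsine integral `π/2`, and the resulting bound on `P` is exactly `P̄`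
because `2T/(mL) = (2σ/m)(1/L₀ - 1/L)`.
-/

theorem hasDerivAt_arcsin_div {r y : ℝ} (hr : 0 < r) (hy : y ∈ Ioo (-r) r) :
    HasDerivAt (fun t => arcsin (t / r)) (1 / √(r ^ 2 - y ^ 2)) y := by
  have hyr : y / r ∈ Ioo (-1) 1 := by
    constructor
    · rw [lt_div_iff₀ hr]; linarith [hy.1]
    · rw [div_lt_iff₀ hr]; linarith [hy.2]
  refine ((hasDerivAt_arcsin hyr.1.ne' hyr.2.ne).comp y
    ((hasDerivAt_id y).div_const r)).congr_deriv ?_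
  have hsq : r ^ 2 - y ^ 2 = r ^ 2 * (1 - (y / r) ^ 2) := by field_simp
  rw [hsq, sqrt_mul (sq_nonneg r), sqrt_sq hr.le]
  field_simp

theorem intervalIntegrable_one_div_sqrt_sq_sub_sq {r : ℝ} (hr : 0 < r) :
    IntervalIntegrable (fun y => 1 / √(r ^ 2 - y ^ 2)) volume 0 r := by
  refine intervalIntegrable_deriv_of_nonneg (g := fun t => arcsin (t / r)) (by fun_prop)
    (fun y hy => hasDerivAt_arcsin_div hr ?_) (fun y _ => by positivity)
  rw [min_eq_left hr.le, max_eq_right hr.le] at hy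
  exact ⟨by linarith [hy.1], hy.2⟩

theorem integral_one_div_sqrt_sq_sub_sq {r : ℝ} (hr : 0 < r) :
    ∫ y in (0 : ℝ)..r, 1 / √(r ^ 2 - y ^ 2) = π / 2 := by
  rw [integral_eq_sub_of_hasDerivAt_of_le hr.le (by fun_prop)
    (fun y hy => hasDerivAt_arcsin_div hr ⟨by linarith [hy.1], hy.2⟩)
    (intervalIntegrable_one_div_sqrt_sq_sub_sq hr)]
  simp [hr.ne', arcsin_one]

theorem integral_one_div_sqrt_sq_sub_sq_mul_sqrt_le {r c : ℝ} {g : ℝ → ℝ} (hr : 0 < r)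
    (hc : 0 < c) (hg : ∀ y, c ≤ g y) :
    ∫ y in (0 : ℝ)..r, 1 / (√(r ^ 2 - y ^ 2) * √(g y)) ≤ π / (2 * √c) := by
  have hbound : ∀ y, 1 / (√(r ^ 2 - y ^ 2) * √(g y)) ≤ (√c)⁻¹ * (1 / √(r ^ 2 - y ^ 2)) := by
    intro y
    rcases (sqrt_nonneg (r ^ 2 - y ^ 2)).eq_or_lt with h0 | h0
    · simp [← h0]
    · rw [inv_mul_eq_div, div_div]
      exact one_div_le_one_div_of_le (by positivity)
        (mul_le_mul_of_nonneg_left (sqrt_le_sqrt (hg y)) h0.le)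
  calc ∫ y in (0 : ℝ)..r, 1 / (√(r ^ 2 - y ^ 2) * √(g y))
      ≤ ∫ y in (0 : ℝ)..r, (√c)⁻¹ * (1 / √(r ^ 2 - y ^ 2)) := by
        rw [integral_of_le hr.le, integral_of_le hr.le]
        exact integral_mono_of_nonneg (.of_forall fun y => by positivity)
          ((intervalIntegrable_iff_integrableOn_Ioc_of_le hr.le).mp
            ((intervalIntegrable_one_div_sqrt_sq_sub_sq hr).const_mul _)) (.of_forall hbound)
    _ = π / (2 * √c) := by
        rw [intervalIntegral.integral_const_mul, integral_one_div_sqrt_sq_sub_sq hr]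
        ring

theorem two_div_sqrt_add_sqrt_le_one_div {L : ℝ} (hL : 0 < L) (a b : ℝ) :
    2 / (√(L ^ 2 + a ^ 2) + √(L ^ 2 + b ^ 2)) ≤ 1 / L := by
  have hle : ∀ x : ℝ, L ≤ √(L ^ 2 + x ^ 2) := fun x =>
    le_sqrt_of_sq_le (by nlinarith [sq_nonneg x])
  rw [div_le_div_iff₀ (by linarith [hle a, hle b]) hL]
  linarith [hle a, hle b]

theorem rayleigh_period_upper_bound
    (σ m L₀ L y₀ T Pbar P : ℝ)
    (hσ : 0 < σ) (hm : 0 < m) (hL₀ : 0 < L₀) (hL : 0 < L) (hy₀ : 0 < y₀)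
    (hLL : L₀ < L)
    (hT : T = σ * (L - L₀) / L₀)
    (hPbar : Pbar = 2 * Real.pi / Real.sqrt (2 * T / (m * L)))
    (hP : P = 4 * Real.sqrt (m / (2 * σ)) *
      ∫ y in (0:ℝ)..y₀,
        1 / (Real.sqrt (y₀ ^ 2 - y ^ 2) *
          Real.sqrt (1 / L₀ -
            2 / (Real.sqrt (L ^ 2 + y ^ 2) + Real.sqrt (L ^ 2 + y₀ ^ 2))))) :
    P ≤ Pbar := by
  have hc : 0 < 1 / L₀ - 1 / L := sub_pos.mpr (one_div_lt_one_div_of_lt hL₀ hLL)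
  have hPbar' : Pbar = 4 * √(m / (2 * σ)) * (π / (2 * √(1 / L₀ - 1 / L))) := by
    have h2T : 2 * T / (m * L) = (m / (2 * σ))⁻¹ * (1 / L₀ - 1 / L) := by
      rw [hT]; field_simp
    rw [hPbar, h2T, sqrt_mul (by positivity), sqrt_inv]
    field_simp
    ring
  rw [hP, hPbar']
  gcongr
  exact integral_one_div_sqrt_sq_sub_sq_mul_sqrt_le hy₀ hc
    fun y => sub_le_sub_left (two_div_sqrt_add_sqrt_le_one_div hL y y₀) _
end

section
/- Let y : ℝ → ℝ be a twice differentiable function satisfying Rayleigh's equation of motion y''(t) = −(2σ/m)·(√(L² + y(t)²) − L₀)/(L₀·√(L² + y(t)²))·y(t) for all t, with initial conditions y(0) = y₀ and y'(0) = 0. Then for every t one has the energy identity (y'(t))² = (2σ/m)·(y₀² − y(t)²)·(1/L₀ − 2/(√(L² + y(t)²) + √(L² + y₀²))). -/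
/-!
The quantity `y'² / 2 + V(y)` with `V(x) = (2σ/m) (x² / (2L₀) - √(L² + x²))` is a first integral of
Rayleigh's equation, since `V'(x)` is exactly the restoring force. Comparing its values at `t` and `0`
gives `y'² = (2σ/m) ((y₀² - y²)/L₀ - 2 (√(L² + y₀²) - √(L² + y²)))`, and rationalising the difference
of square roots, `√(L² + y₀²) - √(L² + y²) = (y₀² - y²) / (√(L² + y²) + √(L² + y₀²))`, factors out
`y₀² - y²`.
-/

open Real

theorem energy_conservation_of_hasDerivAt {y v V V' : ℝ → ℝ}
    (hV : ∀ x, HasDerivAt V (V' x) x)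
    (hy : ∀ t, HasDerivAt y (v t) t) (hv : ∀ t, HasDerivAt v (-V' (y t)) t) (t : ℝ) :
    v t ^ 2 / 2 + V (y t) = v 0 ^ 2 / 2 + V (y 0) := by
  have hE : ∀ s, HasDerivAt (fun s => v s ^ 2 / 2 + V (y s)) 0 s := fun s => by
    refine ((((hv s).fun_pow 2).div_const 2).fun_add ((hV (y s)).comp s (hy s))).congr_deriv ?_
    push_cast
    ring
  exact is_const_of_deriv_eq_zero (fun s => (hE s).differentiableAt) (fun s => (hE s).deriv) t 0

noncomputable def rayleighPotential (k L₀ L x : ℝ) : ℝ :=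
  k * (x ^ 2 / (2 * L₀) - √(L ^ 2 + x ^ 2))

theorem hasDerivAt_rayleighPotential {L₀ L : ℝ} (hL₀ : L₀ ≠ 0) (hL : L ≠ 0) (k x : ℝ) :
    HasDerivAt (rayleighPotential k L₀ L)
      (k * ((√(L ^ 2 + x ^ 2) - L₀) / (L₀ * √(L ^ 2 + x ^ 2))) * x) x := by
  have hpos : 0 < L ^ 2 + x ^ 2 := by positivity
  have hsqrt : HasDerivAt (fun x => √(L ^ 2 + x ^ 2)) (x / √(L ^ 2 + x ^ 2)) x := by
    convert ((hasDerivAt_pow 2 x).const_add (L ^ 2)).sqrt hpos.ne' using 1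
    ring
  refine ((((hasDerivAt_pow 2 x).div_const (2 * L₀)).fun_sub hsqrt).const_mul k).congr_deriv ?_
  field_simp
  ring

theorem sqrt_sub_sqrt_eq_div_add {a b : ℝ} (ha : 0 ≤ a) (hb : 0 ≤ b) :
    √a - √b = (a - b) / (√a + √b) := by
  rcases eq_or_ne (√a + √b) 0 with h | h
  · obtain ⟨ha0, hb0⟩ := (add_eq_zero_iff_of_nonneg (sqrt_nonneg a) (sqrt_nonneg b)).1 h
    rw [h, div_zero, ha0, hb0, sub_zero]
  · rw [eq_div_iff h]
    linear_combination sq_sqrt ha - sq_sqrt hb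

theorem rayleigh_energy_identity_general
    (σ m L₀ L y₀ : ℝ)
    (hL₀ : 0 < L₀) (hL : 0 < L)
    (y : ℝ → ℝ)
    (hy : ∀ t, HasDerivAt y (deriv y t) t)
    (hy' : ∀ t, HasDerivAt (deriv y) (deriv (deriv y) t) t)
    (hODE : ∀ t, deriv (deriv y) t =
      -(2 * σ / m) * ((Real.sqrt (L ^ 2 + y t ^ 2) - L₀) /
        (L₀ * Real.sqrt (L ^ 2 + y t ^ 2))) * y t)
    (h0 : y 0 = y₀) (h0' : deriv y 0 = 0) :
    ∀ t, (deriv y t) ^ 2 =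
      (2 * σ / m) * (y₀ ^ 2 - y t ^ 2) *
        (1 / L₀ - 2 / (Real.sqrt (L ^ 2 + y t ^ 2) + Real.sqrt (L ^ 2 + y₀ ^ 2))) := by
  intro t
  have henergy := energy_conservation_of_hasDerivAt
    (hasDerivAt_rayleighPotential hL₀.ne' hL.ne' (2 * σ / m)) hy
    (fun s => by simpa only [hODE s, neg_mul] using hy' s) t
  have hroot := sqrt_sub_sqrt_eq_div_add (a := L ^ 2 + y₀ ^ 2) (b := L ^ 2 + y t ^ 2)
    (by positivity) (by positivity)
  rw [h0, h0'] at henergy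
  unfold rayleighPotential at henergy
  have hsq : deriv y t ^ 2 = 2 * σ / m * ((y₀ ^ 2 - y t ^ 2) / L₀ -
      2 * (√(L ^ 2 + y₀ ^ 2) - √(L ^ 2 + y t ^ 2))) := by
    linear_combination 2 * henergy
  rw [hsq, hroot]
  ring

theorem rayleigh_energy_identity
    (σ m L₀ L y₀ : ℝ)
    (hσ : 0 < σ) (hm : 0 < m) (hL₀ : 0 < L₀) (hL : 0 < L) (hy₀ : 0 < y₀)
    (hLL : L₀ < L)
    (y : ℝ → ℝ)
    (hy : ∀ t, HasDerivAt y (deriv y t) t)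
    (hy' : ∀ t, HasDerivAt (deriv y) (deriv (deriv y) t) t)
    (hODE : ∀ t, deriv (deriv y) t =
      -(2 * σ / m) * ((Real.sqrt (L ^ 2 + y t ^ 2) - L₀) /
        (L₀ * Real.sqrt (L ^ 2 + y t ^ 2))) * y t)
    (h0 : y 0 = y₀) (h0' : deriv y 0 = 0) :
    ∀ t, (deriv y t) ^ 2 =
      (2 * σ / m) * (y₀ ^ 2 - y t ^ 2) *
        (1 / L₀ - 2 / (Real.sqrt (L ^ 2 + y t ^ 2) + Real.sqrt (L ^ 2 + y₀ ^ 2))) :=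
  rayleigh_energy_identity_general σ m L₀ L y₀ hL₀ hL y hy hy' hODE h0 h0'
end

section
/- Under the stated assumptions, the function y ↦ 1/(√(y₀² − y²) · √(1/L₀ − 2/(√(L² + y²) + √(L² + y₀²)))) is interval-integrable on [0, y₀] with respect to Lebesgue measure; consequently the true period P is a well-defined finite positive real number. -/
/-!
Since `√(L² + y²) ≥ L`, the second factor under the integral sign is at least
`1/L₀ - 1/L > 0`, so the integrand is `1/√(y₀² - y²)` (the derivative of `arcsin (y/y₀)`,
integrable on `[-y₀, y₀]`) times a bounded measurable function. It is positive on `(0, y₀)`,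
hence so is the integral.
-/

open Real MeasureTheory intervalIntegral Set

theorem intervalIntegrable_inv_sqrt_sq_sub_sq {b : ℝ} (hb : 0 < b) :
    IntervalIntegrable (fun y => (√(b ^ 2 - y ^ 2))⁻¹) volume (-b) b := by
  have h := (Polynomial.Chebyshev.intervalIntegrable_sqrt_one_sub_sq_inv.comp_mul_left
    (c := b⁻¹)).const_mul b⁻¹
  convert h using 1
  · funext y
    have hsq : b ^ 2 - y ^ 2 = b ^ 2 * (1 - (b⁻¹ * y) ^ 2) := by field_simp
    rw [hsq, sqrt_mul (sq_nonneg b), sqrt_sq hb.le, mul_inv, sqrt_inv]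
  · field_simp
  · field_simp

theorem IntervalIntegrable.mul_inv_sqrt_of_le {f g : ℝ → ℝ} {a b c : ℝ}
    (hf : IntervalIntegrable f volume a b) (hg : Measurable g) (hc : 0 < c)
    (hcg : ∀ y, c ≤ g y) :
    IntervalIntegrable (fun y => f y * (√(g y))⁻¹) volume a b := by
  rw [intervalIntegrable_iff] at hf ⊢
  refine hf.mul_bdd (c := (√c)⁻¹) (by fun_prop) (ae_of_all _ fun y => ?_)
  rw [norm_inv, norm_of_nonneg (sqrt_nonneg _)]
  exact inv_anti₀ (sqrt_pos.2 hc) (sqrt_le_sqrt (hcg y))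

theorem two_div_sqrt_add_sqrt_le_inv {L : ℝ} (hL : 0 < L) (y z : ℝ) :
    2 / (√(L ^ 2 + y ^ 2) + √(L ^ 2 + z ^ 2)) ≤ L⁻¹ := by
  have hy : L ≤ √(L ^ 2 + y ^ 2) := (le_sqrt' hL).2 (by nlinarith)
  have hz : L ≤ √(L ^ 2 + z ^ 2) := (le_sqrt' hL).2 (by nlinarith)
  calc 2 / (√(L ^ 2 + y ^ 2) + √(L ^ 2 + z ^ 2)) ≤ 2 / (2 * L) :=
        div_le_div_of_nonneg_left zero_le_two (by positivity) (by linarith)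
    _ = L⁻¹ := by field_simp

theorem rayleigh_integrand_intervalIntegrable_and_period_pos
    (σ m L₀ L y₀ : ℝ)
    (hσ : 0 < σ) (hm : 0 < m) (hL₀ : 0 < L₀) (hL : 0 < L) (hy₀ : 0 < y₀)
    (hLL : L₀ < L) :
    IntervalIntegrable
      (fun y : ℝ =>
        1 / (Real.sqrt (y₀ ^ 2 - y ^ 2) *
          Real.sqrt (1 / L₀ -
            2 / (Real.sqrt (L ^ 2 + y ^ 2) + Real.sqrt (L ^ 2 + y₀ ^ 2)))))
      MeasureTheory.volume 0 y₀ ∧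
    0 < 4 * Real.sqrt (m / (2 * σ)) *
      ∫ y in (0:ℝ)..y₀,
        1 / (Real.sqrt (y₀ ^ 2 - y ^ 2) *
          Real.sqrt (1 / L₀ -
            2 / (Real.sqrt (L ^ 2 + y ^ 2) + Real.sqrt (L ^ 2 + y₀ ^ 2)))) := by
  set g : ℝ → ℝ := fun y => 1 / L₀ - 2 / (√(L ^ 2 + y ^ 2) + √(L ^ 2 + y₀ ^ 2))
  have hc : 0 < 1 / L₀ - L⁻¹ := sub_pos.2 (by simpa using inv_strictAnti₀ hL₀ hLL)
  have hcg : ∀ y, 1 / L₀ - L⁻¹ ≤ g y := fun y =>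
    sub_le_sub_left (two_div_sqrt_add_sqrt_le_inv hL y y₀) _
  have hint : IntervalIntegrable (fun y => 1 / (√(y₀ ^ 2 - y ^ 2) * √(g y))) volume 0 y₀ := by
    have hsplit : (fun y => 1 / (√(y₀ ^ 2 - y ^ 2) * √(g y))) =
        fun y => (√(y₀ ^ 2 - y ^ 2))⁻¹ * (√(g y))⁻¹ := by
      funext y; rw [one_div, mul_inv]
    have hsub : uIcc 0 y₀ ⊆ uIcc (-y₀) y₀ :=
      uIcc_subset_uIcc (mem_uIcc.2 (.inl ⟨by linarith, hy₀.le⟩)) right_mem_uIcc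
    rw [hsplit]
    exact ((intervalIntegrable_inv_sqrt_sq_sub_sq hy₀).mono_set hsub).mul_inv_sqrt_of_le
      (by fun_prop) hc hcg
  refine ⟨hint, mul_pos (by positivity) (intervalIntegral_pos_of_pos_on hint (fun y hy => ?_) hy₀)⟩
  have h₁ : 0 < √(y₀ ^ 2 - y ^ 2) := sqrt_pos.2 (by nlinarith [hy.1, hy.2])
  have h₂ : 0 < √(g y) := sqrt_pos.2 (hc.trans_le (hcg y))
  positivity
end

section
/- Under the stated assumptions, with z₀ := √(L² + y₀²), the true period admits the change-of-variables representation P = 4·√(m/(2σ)) · ∫_L^{z₀} z/√((1/L₀)·(z² − L²)·(z₀ − z)·(z + z₀ − 2L₀)) dz, where the expression under the square root is a quartic polynomial in z; that is, the integral over y in the definition of P equals this integral over z obtained from the substitution z² = L² + y². -/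
/-!
Substitute `z = √(L² + y²)`. This map is increasing on `[0, y₀]`, so the substitution is valid
without any integrability of the (endpoint-singular) integrand. With `z² − L² = y²`,
`y₀² − y² = (z₀ − z)(z₀ + z)` and hence
`(y₀² − y²)(1/L₀ − 2/(z + z₀)) = (z₀ − z)(z + z₀ − 2L₀)/L₀`, the old integrand is the new one
times `dz/dy = y/z`.
-/

open Real intervalIntegral Set

lemma hasDerivAt_sqrt_sq_add {L y : ℝ} (h : L ^ 2 + y ^ 2 ≠ 0) :
    HasDerivAt (fun t ↦ √(L ^ 2 + t ^ 2)) (y / √(L ^ 2 + y ^ 2)) y := by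
  convert ((hasDerivAt_pow 2 y).const_add (L ^ 2)).sqrt h using 1
  field_simp
  norm_num [mul_comm]

theorem integral_comp_sqrt_sq_add_mul_deriv {L y₀ : ℝ} (hL : 0 ≤ L) (hy₀ : 0 ≤ y₀) (g : ℝ → ℝ) :
    ∫ y in 0..y₀, g √(L ^ 2 + y ^ 2) * (y / √(L ^ 2 + y ^ 2)) =
      ∫ z in L..√(L ^ 2 + y₀ ^ 2), g z := by
  have h := integral_comp_mul_deriv_of_deriv_nonneg (g := g)
    (f := fun t ↦ √(L ^ 2 + t ^ 2)) (f' := fun y ↦ y / √(L ^ 2 + y ^ 2)) (a := 0) (b := y₀)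
    (by fun_prop) ?_ ?_
  · simpa [sqrt_sq hL] using h
  all_goals
    rintro y ⟨hy, -⟩
    rw [min_eq_left hy₀] at hy
  · exact hasDerivAt_sqrt_sq_add (by positivity)
  · positivity

lemma rayleigh_integrand_eq_comp_mul_deriv {L L₀ y y₀ z z₀ : ℝ} (hL₀ : L₀ ≠ 0) (hy : 0 < y)
    (hz : 0 < z) (hzz₀ : z ≤ z₀) (hz_sq : z ^ 2 = L ^ 2 + y ^ 2) (hz₀_sq : z₀ ^ 2 = L ^ 2 + y₀ ^ 2) :
    1 / (√(y₀ ^ 2 - y ^ 2) * √(1 / L₀ - 2 / (z + z₀))) =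
      z / √(1 / L₀ * (z ^ 2 - L ^ 2) * (z₀ - z) * (z + z₀ - 2 * L₀)) * (y / z) := by
  have hsum : z + z₀ ≠ 0 := by linarith
  have hleft : (y₀ ^ 2 - y ^ 2) * (1 / L₀ - 2 / (z + z₀)) =
      (z₀ - z) * (z + z₀ - 2 * L₀) / L₀ := by
    rw [show y₀ ^ 2 - y ^ 2 = (z₀ - z) * (z₀ + z) by linear_combination hz_sq - hz₀_sq]
    field_simp
    ring
  have hright : 1 / L₀ * (z ^ 2 - L ^ 2) * (z₀ - z) * (z + z₀ - 2 * L₀) =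
      y ^ 2 * ((z₀ - z) * (z + z₀ - 2 * L₀) / L₀) := by
    rw [hz_sq]
    field_simp
    ring
  rw [← sqrt_mul (by nlinarith), hleft, hright, sqrt_mul (sq_nonneg y), sqrt_sq hy.le]
  rcases eq_or_ne √((z₀ - z) * (z + z₀ - 2 * L₀) / L₀) 0 with hW | hW
  · simp [hW]
  · field_simp

theorem rayleigh_period_change_of_variables_general
    (σ m L₀ L y₀ z₀ P : ℝ)
    (hL₀ : 0 < L₀) (hL : 0 < L) (hy₀ : 0 < y₀)
    (hz₀ : z₀ = Real.sqrt (L ^ 2 + y₀ ^ 2))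
    (hP : P = 4 * Real.sqrt (m / (2 * σ)) *
      ∫ y in (0:ℝ)..y₀,
        1 / (Real.sqrt (y₀ ^ 2 - y ^ 2) *
          Real.sqrt (1 / L₀ -
            2 / (Real.sqrt (L ^ 2 + y ^ 2) + Real.sqrt (L ^ 2 + y₀ ^ 2))))) :
    P = 4 * Real.sqrt (m / (2 * σ)) *
      ∫ z in L..z₀,
        z / Real.sqrt ((1 / L₀) * (z ^ 2 - L ^ 2) * (z₀ - z) * (z + z₀ - 2 * L₀)) := by
  rw [hP, hz₀, ← integral_comp_sqrt_sq_add_mul_deriv hL.le hy₀.le]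
  congr 1
  refine integral_congr_ae (.of_forall fun y hy ↦ ?_)
  rw [uIoc_of_le hy₀.le] at hy
  exact rayleigh_integrand_eq_comp_mul_deriv hL₀.ne' hy.1 (by positivity)
    (sqrt_le_sqrt (by gcongr; exacts [hy.1.le, hy.2]))
    (sq_sqrt (by positivity)) (sq_sqrt (by positivity))

theorem rayleigh_period_change_of_variables
    (σ m L₀ L y₀ z₀ P : ℝ)
    (hσ : 0 < σ) (hm : 0 < m) (hL₀ : 0 < L₀) (hL : 0 < L) (hy₀ : 0 < y₀)
    (hLL : L₀ < L)
    (hz₀ : z₀ = Real.sqrt (L ^ 2 + y₀ ^ 2))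
    (hP : P = 4 * Real.sqrt (m / (2 * σ)) *
      ∫ y in (0:ℝ)..y₀,
        1 / (Real.sqrt (y₀ ^ 2 - y ^ 2) *
          Real.sqrt (1 / L₀ -
            2 / (Real.sqrt (L ^ 2 + y ^ 2) + Real.sqrt (L ^ 2 + y₀ ^ 2))))) :
    P = 4 * Real.sqrt (m / (2 * σ)) *
      ∫ z in L..z₀,
        z / Real.sqrt ((1 / L₀) * (z ^ 2 - L ^ 2) * (z₀ - z) * (z + z₀ - 2 * L₀)) :=
  rayleigh_period_change_of_variables_general σ m L₀ L y₀ z₀ P hL₀ hL hy₀ hz₀ hP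
end
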